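/- If Ψ(b*, q*) ≥ 0 for fixed b* ∈ (0,1) and q* > 0, then Ψ(b*, q) ≥ 0 for all q ≥ q*; that is, q ↦ Ψ(b,q) is monotonically nondecreasing in q for fixed b ∈ (0,1). -/

import Mathlib

/-!
By Cardano's formula, `t = psi z` is the nonnegative root of `t ^ 3 = z * (3 * t + 2)`. Since
`t ↦ t ^ 3 / (3 * t + 2)` is strictly increasing for `t ≥ 0`, its right inverse `psi` is monotone on
`[0, 1]`. As `zeta b q` decreases in `q`, so does the subtracted term `2 ψ + ψ ^ 2`, while the first
term of `Psi b q` increases in `q`.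
-/

noncomputable def psi (z : ℝ) : ℝ :=
  z ^ ((1:ℝ)/3) * ((1 + Real.sqrt (1 - z)) ^ ((1:ℝ)/3) + (1 - Real.sqrt (1 - z)) ^ ((1:ℝ)/3))

noncomputable def zeta (b q : ℝ) : ℝ :=
  (2/9) * (b^2 / ((b+1)*(b+2))) * ((b+q+3)*(b+q+4) / (b+q+2)^2)

noncomputable def Psi (b q : ℝ) : ℝ :=
  (4/3) * (b / (1 - b)) * ((b+q+1) / (b+q+2)) - 2 * psi (zeta b q) - (psi (zeta b q))^2

lemma rpow_one_third_pow_three {x : ℝ} (hx : 0 ≤ x) : (x ^ ((1:ℝ)/3)) ^ 3 = x := by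
  rw [one_div]
  exact_mod_cast Real.rpow_inv_natCast_pow hx three_ne_zero

lemma sqrt_one_sub_le_one {z : ℝ} (hz : 0 ≤ z) : Real.sqrt (1 - z) ≤ 1 :=
  Real.sqrt_le_one.mpr (by linarith)

lemma psi_nonneg {z : ℝ} (hz : 0 ≤ z) : 0 ≤ psi z := by
  have := sqrt_one_sub_le_one hz
  unfold psi
  positivity

lemma psi_pow_three {z : ℝ} (hz0 : 0 ≤ z) (hz1 : z ≤ 1) :
    psi z ^ 3 = z * (3 * psi z + 2) := by
  set s := Real.sqrt (1 - z)
  have hs0 : 0 ≤ s := Real.sqrt_nonneg _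
  have hs1 : s ≤ 1 := sqrt_one_sub_le_one hz0
  have hs2 : s ^ 2 = 1 - z := Real.sq_sqrt (by linarith)
  set u := (1 + s) ^ ((1:ℝ)/3)
  set v := (1 - s) ^ ((1:ℝ)/3)
  set w := z ^ ((1:ℝ)/3)
  have hu3 : u ^ 3 = 1 + s := rpow_one_third_pow_three (by linarith)
  have hv3 : v ^ 3 = 1 - s := rpow_one_third_pow_three (by linarith)
  have hw3 : w ^ 3 = z := rpow_one_third_pow_three hz0
  have huv : u * v = w := by
    rw [← Real.mul_rpow (by linarith) (by linarith)]
    congr 1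
    nlinarith
  calc psi z ^ 3 = w ^ 3 * (u ^ 3 + v ^ 3 + 3 * (u * v) * (u + v)) := by
        simp only [psi]; ring
    _ = z * (3 * psi z + 2) := by
        rw [hw3, hu3, hv3, huv]; simp only [psi]; ring

lemma strictMonoOn_cube_div : StrictMonoOn (fun t : ℝ => t ^ 3 / (3 * t + 2)) (Set.Ici 0) := by
  intro s (hs : 0 ≤ s) t (ht : 0 ≤ t) hst
  rw [div_lt_div_iff₀ (by positivity) (by positivity)]
  nlinarith [mul_nonneg hs ht, pow_lt_pow_left₀ hst hs three_ne_zero,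
    mul_le_mul_of_nonneg_left (pow_le_pow_left₀ hs hst.le 2) (mul_nonneg hs ht)]

lemma psi_monotoneOn : MonotoneOn psi (Set.Icc 0 1) := by
  have hinv : ∀ z ∈ Set.Icc (0:ℝ) 1, psi z ^ 3 / (3 * psi z + 2) = z := fun z hz => by
    have := psi_nonneg hz.1
    rw [psi_pow_three hz.1 hz.2, mul_div_cancel_right₀ _ (by positivity)]
  intro z₁ hz₁ z₂ hz₂ hz
  rwa [← strictMonoOn_cube_div.le_iff_le (psi_nonneg hz₁.1) (psi_nonneg hz₂.1),
    hinv z₁ hz₁, hinv z₂ hz₂]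

lemma zeta_mem_Icc {b q : ℝ} (hb : 0 ≤ b) (hq : 0 ≤ q) : zeta b q ∈ Set.Icc 0 1 := by
  have hx : 0 < b + q + 2 := by linarith
  refine ⟨by unfold zeta; positivity, ?_⟩
  rw [zeta, div_mul_div_comm, div_mul_div_comm, div_le_one (by positivity)]
  nlinarith [sq_nonneg b, sq_nonneg (b + q), mul_pos hx hx, mul_nonneg hb hq]

lemma zeta_antitoneOn {b : ℝ} (hb : 0 ≤ b) : AntitoneOn (zeta b) (Set.Ici 0) := by
  intro q₀ (hq₀ : 0 ≤ q₀) q (hq : 0 ≤ q) hle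
  unfold zeta
  gcongr ?_ * ?_
  rw [div_le_div_iff₀ (by positivity) (by positivity)]
  nlinarith [sq_nonneg (q - q₀), mul_nonneg (sub_nonneg.2 hle) (by linarith : 0 ≤ b + q₀ + 2)]

lemma Psi_monotoneOn {b : ℝ} (hb0 : 0 ≤ b) (hb1 : b < 1) : MonotoneOn (Psi b) (Set.Ici 0) := by
  intro q₀ (hq₀ : 0 ≤ q₀) q (hq : 0 ≤ q) hle
  have hψ : psi (zeta b q) ≤ psi (zeta b q₀) :=
    psi_monotoneOn (zeta_mem_Icc hb0 hq) (zeta_mem_Icc hb0 hq₀) (zeta_antitoneOn hb0 hq₀ hq hle)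
  have hψ0 : 0 ≤ psi (zeta b q) := psi_nonneg (zeta_mem_Icc hb0 hq).1
  have hfrac : (b + q₀ + 1) / (b + q₀ + 2) ≤ (b + q + 1) / (b + q + 2) := by
    rw [div_le_div_iff₀ (by positivity) (by positivity)]
    nlinarith
  have hT : (4/3) * (b / (1 - b)) * ((b + q₀ + 1) / (b + q₀ + 2)) ≤
      (4/3) * (b / (1 - b)) * ((b + q + 1) / (b + q + 2)) :=
    mul_le_mul_of_nonneg_left hfrac (by have : 0 < 1 - b := (by linarith); positivity)
  unfold Psi
  nlinarith

theorem Psi_monotone (b q₀ : ℝ) (hb0 : 0 < b) (hb1 : b < 1) (hq0 : 0 < q₀)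
    (hΨ : 0 ≤ Psi b q₀) :
    ∀ q : ℝ, q₀ ≤ q → 0 ≤ Psi b q := fun _ hq =>
  hΨ.trans (Psi_monotoneOn hb0.le hb1 hq0.le (hq0.le.trans hq) hq)
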